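/- arXiv:2502.03096 — 2 statements merged into one kernel-verified Lean document; each statement's English description precedes it below -/
import Mathlib

section
/- Let f : {v ∈ ℝ³ : n·v > 0} → ℝ be square integrable against (n·v)dv, where n is a unit vector, and let μ be the standard Maxwellian with c_μ = √(2π). Define P_γ f(v) = c_μ √(μ(v)) ∫_{{n·u>0}} f(u) √(μ(u)) (n·u) du (for all v ∈ ℝ³), and extend f to incoming velocities by f(v) = P_γ f(v) for n·v < 0. Then ∫_{ℝ³} |f(v)|² (n·v) dv = ∫_{{n·v>0}} |(I − P_γ)f(v)|² (n·v) dv. -/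
open MeasureTheory Real

noncomputable def gaussMu (v : EuclideanSpace ℝ (Fin 3)) : ℝ :=
  (2 * π) ^ (-(3:ℝ)/2) * Real.exp (-‖v‖^2 / 2)

/-- The outgoing half-space `{u : n·u > 0}`. -/
def outSet (n : EuclideanSpace ℝ (Fin 3)) : Set (EuclideanSpace ℝ (Fin 3)) :=
  {u | 0 < (inner ℝ n u : ℝ)}

/-- The diffuse-reflection boundary operator
`P_γ f(v) = √(2π) √μ(v) ∫_{n·u>0} f(u)√μ(u)(n·u) du`. -/
noncomputable def Pgamma (n : EuclideanSpace ℝ (Fin 3))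
    (f : EuclideanSpace ℝ (Fin 3) → ℝ) (v : EuclideanSpace ℝ (Fin 3)) : ℝ :=
  Real.sqrt (2 * π) * Real.sqrt (gaussMu v) *
    ∫ u in outSet n, f u * Real.sqrt (gaussMu u) * (inner ℝ n u : ℝ)

/-!
Write `P_γ f = √(2π) √μ · a` with `a = ∫_{n·u>0} f √μ (n·u) du`. In an orthonormal frame whose
first vector is `n` the Maxwellian factorises, which gives the outgoing flux
`∫_{n·v>0} μ(v)(n·v) dv = 1/√(2π)`; since `μ(v)(n·v)` is odd, the incoming flux is `-1/√(2π)`.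
On incoming velocities `f = P_γ f`, so the incoming part of `∫ f²(n·v)` is `-√(2π) a²`, while
expanding the square on the outgoing side gives `∫_{n·v>0} f²(n·v) - 2√(2π) a² + √(2π) a²`.
-/

open Set Module

lemma integrable_exp_neg_sq_div_two : Integrable fun t : ℝ => exp (-t ^ 2 / 2) := by
  simpa [neg_div, div_eq_inv_mul, ← neg_mul] using
    integrable_exp_neg_mul_sq (b := 1 / 2) (by norm_num)

lemma integrable_exp_neg_sq_div_two_mul_self : Integrable fun t : ℝ => exp (-t ^ 2 / 2) * t := by
  simpa [neg_div, div_eq_inv_mul, ← neg_mul, mul_comm] using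
    integrable_mul_exp_neg_mul_sq (b := 1 / 2) (by norm_num)

lemma integral_exp_neg_sq_div_two : ∫ t : ℝ, exp (-t ^ 2 / 2) = √(2 * π) := by
  simpa [neg_div, div_eq_inv_mul, ← neg_mul] using integral_gaussian (1 / 2)

lemma integral_Ioi_mul_exp_neg_sq_div_two : ∫ t in Ioi (0 : ℝ), t * exp (-t ^ 2 / 2) = 1 := by
  have h := integral_mul_cexp_neg_mul_sq (b := 1 / 2) (by norm_num)
  norm_num at h
  rw [← Complex.ofReal_inj, ← integral_complex_ofReal, Complex.ofReal_one, ← h]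
  push_cast
  ring_nf

section GaussianCoordinates

variable {E : Type*} [NormedAddCommGroup E] [InnerProductSpace ℝ E] [FiniteDimensional ℝ E]
  {d : ℕ}

lemma exists_orthonormalBasis_apply_zero (hd : finrank ℝ E = d + 1) {n : E} (hn : ‖n‖ = 1) :
    ∃ b : OrthonormalBasis (Fin (d + 1)) ℝ E, b 0 = n := by
  have horth : Orthonormal ℝ (({0} : Set (Fin (d + 1))).domRestrict fun _ => n) :=
    ⟨fun _ => hn, fun i j hij => absurd (Subsingleton.elim i j) hij⟩
  obtain ⟨b, hb⟩ := horth.exists_orthonormalBasis_extension_of_card_eq (by simpa using hd)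
  exact ⟨b, hb 0 rfl⟩

noncomputable def gaussCoordFactor (φ : ℝ → ℝ) : Fin (d + 1) → ℝ → ℝ :=
  Fin.cons (fun t => exp (-t ^ 2 / 2) * φ t) fun _ t => exp (-t ^ 2 / 2)

variable [MeasurableSpace E] [BorelSpace E]

lemma exists_measurePreserving_exp_mul_comp_inner_eq_prod (hd : finrank ℝ E = d + 1) {n : E}
    (hn : ‖n‖ = 1) :
    ∃ ψ : E ≃ᵐ (Fin (d + 1) → ℝ), MeasurePreserving ψ ∧ ∀ (φ : ℝ → ℝ) (v : E),
      exp (-‖v‖ ^ 2 / 2) * φ (inner ℝ n v) = ∏ i, gaussCoordFactor φ i (ψ v i) := by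
  obtain ⟨b, hb⟩ := exists_orthonormalBasis_apply_zero hd hn
  let ψ := b.measurableEquiv.trans (MeasurableEquiv.toLp 2 (Fin (d + 1) → ℝ)).symm
  have hcoord : ∀ v i, ψ v i = inner ℝ (b i) v := fun v i => b.repr_apply_apply v i
  refine ⟨ψ, (PiLp.volume_preserving_ofLp _).comp b.measurePreserving_measurableEquiv,
    fun φ v => ?_⟩
  rw [← b.sum_sq_norm_inner_right v, Fin.sum_univ_succ]
  simp only [hcoord, Fin.prod_univ_succ, gaussCoordFactor, Fin.cons_zero, Fin.cons_succ, hb,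
    Real.norm_eq_abs, sq_abs, neg_add, add_div, exp_add, Finset.sum_div,
    ← Finset.sum_neg_distrib, exp_sum, neg_div]
  ring

lemma integral_exp_neg_sq_norm_div_two_mul_comp_inner (hd : finrank ℝ E = d + 1) {n : E}
    (hn : ‖n‖ = 1) (φ : ℝ → ℝ) :
    ∫ v : E, exp (-‖v‖ ^ 2 / 2) * φ (inner ℝ n v) =
      (∫ t, exp (-t ^ 2 / 2) * φ t) * √(2 * π) ^ d := by
  obtain ⟨ψ, hψ, hprod⟩ := exists_measurePreserving_exp_mul_comp_inner_eq_prod hd hn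
  simp only [hprod]
  rw [hψ.integral_comp' (g := fun x => ∏ i, gaussCoordFactor φ i (x i)),
    integral_fintype_prod_volume_eq_prod, Fin.prod_univ_succ]
  simp [gaussCoordFactor, integral_exp_neg_sq_div_two]

lemma integrable_exp_neg_sq_norm_div_two_mul_comp_inner (hd : finrank ℝ E = d + 1) {n : E}
    (hn : ‖n‖ = 1) {φ : ℝ → ℝ} (hφ : Integrable fun t => exp (-t ^ 2 / 2) * φ t) :
    Integrable fun v : E => exp (-‖v‖ ^ 2 / 2) * φ (inner ℝ n v) := by
  obtain ⟨ψ, hψ, hprod⟩ := exists_measurePreserving_exp_mul_comp_inner_eq_prod hd hn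
  simp only [hprod]
  refine (hψ.integrable_comp_emb ψ.measurableEmbedding).2 (Integrable.fintype_prod fun i => ?_)
  exact Fin.cases hφ (fun _ => integrable_exp_neg_sq_div_two) i

lemma setIntegral_inner_pos_exp_neg_sq_norm_div_two_mul_inner (hd : finrank ℝ E = d + 1)
    {n : E} (hn : ‖n‖ = 1) :
    ∫ v in {v : E | 0 < inner ℝ n v}, exp (-‖v‖ ^ 2 / 2) * inner ℝ n v = √(2 * π) ^ d := by
  have hhalf : {v : E | 0 < inner ℝ n v}.indicator (fun v => exp (-‖v‖ ^ 2 / 2) * inner ℝ n v)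
      = fun v => exp (-‖v‖ ^ 2 / 2) * (Ioi 0).indicator id (inner ℝ n v) := by
    ext v
    by_cases hv : 0 < inner ℝ n v <;> simp [hv]
  have hline : (fun t => exp (-t ^ 2 / 2) * (Ioi 0).indicator id t)
      = (Ioi 0).indicator fun t => t * exp (-t ^ 2 / 2) := by
    ext t
    by_cases ht : 0 < t <;> simp [ht, mul_comm]
  rw [← integral_indicator (measurableSet_lt measurable_const (by fun_prop)), hhalf,
    integral_exp_neg_sq_norm_div_two_mul_comp_inner hd hn, hline,
    integral_indicator measurableSet_Ioi, integral_Ioi_mul_exp_neg_sq_div_two, one_mul]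

lemma integral_mul_inner_eq_zero_of_even {g : E → ℝ} (hg : g.Even) (n : E) :
    ∫ v, g v * inner ℝ n v = 0 := by
  have h := integral_neg_eq_self (fun v => g v * inner ℝ n v) volume
  simp only [hg _, inner_neg_right, mul_neg, integral_neg] at h
  linarith

end GaussianCoordinates

lemma finrank_euclideanSpace_fin_three : finrank ℝ (EuclideanSpace ℝ (Fin 3)) = 2 + 1 := by
  simp

lemma gaussMu_mul_inner (n v : EuclideanSpace ℝ (Fin 3)) :
    gaussMu v * inner ℝ n v =
      (2 * π) ^ (-(3 : ℝ) / 2) * (exp (-‖v‖ ^ 2 / 2) * inner ℝ n v) := by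
  rw [gaussMu, mul_assoc]

lemma integrable_gaussMu_mul_inner {n : EuclideanSpace ℝ (Fin 3)} (hn : ‖n‖ = 1) :
    Integrable fun v => gaussMu v * inner ℝ n v := by
  simp only [gaussMu_mul_inner]
  exact (integrable_exp_neg_sq_norm_div_two_mul_comp_inner finrank_euclideanSpace_fin_three hn
    integrable_exp_neg_sq_div_two_mul_self).const_mul _

lemma integral_gaussMu_mul_inner (n : EuclideanSpace ℝ (Fin 3)) :
    ∫ v, gaussMu v * inner ℝ n v = 0 :=
  integral_mul_inner_eq_zero_of_even (fun v => by simp [gaussMu]) n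

lemma measurableSet_outSet (n : EuclideanSpace ℝ (Fin 3)) : MeasurableSet (outSet n) :=
  measurableSet_lt measurable_const (by fun_prop)

lemma setIntegral_outSet_gaussMu_mul_inner {n : EuclideanSpace ℝ (Fin 3)} (hn : ‖n‖ = 1) :
    ∫ v in outSet n, gaussMu v * inner ℝ n v = (√(2 * π))⁻¹ := by
  have h2π : 0 < 2 * π := by positivity
  simp only [gaussMu_mul_inner, integral_const_mul, outSet,
    setIntegral_inner_pos_exp_neg_sq_norm_div_two_mul_inner finrank_euclideanSpace_fin_three hn]
  rw [sq_sqrt h2π.le, sqrt_eq_rpow, ← rpow_neg h2π.le, ← rpow_add_one h2π.ne']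
  norm_num

lemma setIntegral_compl_outSet_gaussMu_mul_inner {n : EuclideanSpace ℝ (Fin 3)} (hn : ‖n‖ = 1) :
    ∫ v in (outSet n)ᶜ, gaussMu v * inner ℝ n v = -(√(2 * π))⁻¹ := by
  have h := integral_add_compl (measurableSet_outSet n) (integrable_gaussMu_mul_inner hn)
  rw [integral_gaussMu_mul_inner, setIntegral_outSet_gaussMu_mul_inner hn] at h
  linarith

lemma integrable_integral_mul_self {α : Type*} [MeasurableSpace α] {μ : Measure α} (g : α → ℝ) :
    Integrable (fun x => (∫ y, g y ∂μ) * g x) μ := by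
  by_cases hg : Integrable g μ
  · exact hg.const_mul _
  · simp [integral_undef hg]

lemma two_pi_mul_inv_sqrt : 2 * π * (√(2 * π))⁻¹ = √(2 * π) := by
  rw [← div_eq_mul_inv, div_sqrt]

noncomputable def pgammaCoeff (n : EuclideanSpace ℝ (Fin 3)) (f : EuclideanSpace ℝ (Fin 3) → ℝ) :
    ℝ :=
  ∫ u in outSet n, f u * √(gaussMu u) * inner ℝ n u

section Pgamma

variable {n : EuclideanSpace ℝ (Fin 3)} {f : EuclideanSpace ℝ (Fin 3) → ℝ}

lemma Pgamma_eq (v : EuclideanSpace ℝ (Fin 3)) :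
    Pgamma n f v = √(2 * π) * √(gaussMu v) * pgammaCoeff n f :=
  rfl

lemma Pgamma_sq_mul_inner (v : EuclideanSpace ℝ (Fin 3)) :
    Pgamma n f v ^ 2 * inner ℝ n v =
      2 * π * pgammaCoeff n f ^ 2 * (gaussMu v * inner ℝ n v) := by
  have hμ : 0 ≤ gaussMu v := by unfold gaussMu; positivity
  rw [Pgamma_eq, mul_pow, mul_pow, sq_sqrt (by positivity), sq_sqrt hμ]
  ring

lemma integrable_Pgamma_sq_mul_inner (hn : ‖n‖ = 1) :
    Integrable fun v => Pgamma n f v ^ 2 * inner ℝ n v := by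
  simp only [Pgamma_sq_mul_inner]
  exact (integrable_gaussMu_mul_inner hn).const_mul _

lemma setIntegral_compl_outSet_Pgamma_sq_mul_inner (hn : ‖n‖ = 1) :
    ∫ v in (outSet n)ᶜ, Pgamma n f v ^ 2 * inner ℝ n v = -(√(2 * π) * pgammaCoeff n f ^ 2) := by
  simp only [Pgamma_sq_mul_inner, integral_const_mul,
    setIntegral_compl_outSet_gaussMu_mul_inner hn]
  linear_combination (-pgammaCoeff n f ^ 2) * two_pi_mul_inv_sqrt

lemma setIntegral_outSet_sub_Pgamma_sq_mul_inner (hn : ‖n‖ = 1)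
    (hsq : IntegrableOn (fun v => f v ^ 2 * inner ℝ n v) (outSet n)) :
    ∫ v in outSet n, (f v - Pgamma n f v) ^ 2 * inner ℝ n v =
      (∫ v in outSet n, f v ^ 2 * inner ℝ n v) - √(2 * π) * pgammaCoeff n f ^ 2 := by
  set a := pgammaCoeff n f
  have hexpand : ∀ v, (f v - Pgamma n f v) ^ 2 * inner ℝ n v =
      f v ^ 2 * inner ℝ n v - 2 * √(2 * π) * (a * (f v * √(gaussMu v) * inner ℝ n v))
        + Pgamma n f v ^ 2 * inner ℝ n v := by
    intro v
    rw [Pgamma_eq]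
    ring
  -- `f` is not assumed measurable, so `f √μ (n·u)` may fail to be integrable; but then `a = 0`.
  have hcross : IntegrableOn (fun v => 2 * √(2 * π) * (a * (f v * √(gaussMu v) * inner ℝ n v)))
      (outSet n) :=
    (integrable_integral_mul_self _).const_mul _
  simp only [hexpand]
  rw [integral_add ?_ (integrable_Pgamma_sq_mul_inner hn).integrableOn, integral_sub hsq hcross]
  · simp only [Pgamma_sq_mul_inner, integral_const_mul, setIntegral_outSet_gaussMu_mul_inner hn]
    rw [← pgammaCoeff]
    linear_combination a ^ 2 * two_pi_mul_inv_sqrt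
  · exact hsq.sub hcross

end Pgamma

/-- Coercivity identity for the diffuse reflection boundary: if `f = P_γ f` on incoming
velocities, then `∫ |f|²(n·v) dv = ∫_{n·v>0} |(I−P_γ)f|²(n·v) dv`. -/
theorem stmt11 (n : EuclideanSpace ℝ (Fin 3)) (hn : ‖n‖ = 1)
    (f : EuclideanSpace ℝ (Fin 3) → ℝ)
    (hsq : IntegrableOn (fun v => (f v)^2 * (inner ℝ n v : ℝ)) (outSet n))
    (hbc : ∀ v, (inner ℝ n v : ℝ) < 0 → f v = Pgamma n f v) :
    ∫ v, (f v)^2 * (inner ℝ n v : ℝ) =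
      ∫ v in outSet n, (f v - Pgamma n f v)^2 * (inner ℝ n v : ℝ) := by
  have hincoming : EqOn (fun v => f v ^ 2 * inner ℝ n v)
      (fun v => Pgamma n f v ^ 2 * inner ℝ n v) (outSet n)ᶜ := by
    intro v hv
    rcases (not_lt.1 (show ¬0 < inner ℝ n v from hv)).lt_or_eq with hneg | hzero
    · simp only [hbc v hneg]
    · simp [hzero]
  have hint : Integrable fun v => f v ^ 2 * inner ℝ n v := by
    rw [← integrableOn_univ, ← union_compl_self (outSet n)]
    exact hsq.union ((integrable_Pgamma_sq_mul_inner hn).integrableOn.congr_fun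
      hincoming.symm (measurableSet_outSet n).compl)
  rw [← integral_add_compl (measurableSet_outSet n) hint,
    setIntegral_congr_fun (measurableSet_outSet n).compl hincoming,
    setIntegral_compl_outSet_Pgamma_sq_mul_inner hn,
    setIntegral_outSet_sub_Pgamma_sq_mul_inner hn hsq]
  ring
end

section
/- Let μ, w be as above with 0 ≤ θ < 1/4, let ‖wf₁‖_∞ ≤ δ, ‖wf₂‖_∞ ≤ δ with δ small enough that both densities ρₖ ≥ 1/2. Define Uₖ = ρₖ^{-1} ∫ v Fₖ(v) dv where Fₖ = μ + √μ fₖ. Then there exists C, independent of f₁, f₂, with |U₁ − U₂| ≤ C ‖w(f₁ − f₂)‖_∞. -/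
/-
Since `w ≥ 1`, the weighted bounds control `f₁`, `f₂` and `f₁ - f₂` pointwise. The density and the
momentum `Aₖ = ∫ Fₖ v dv` are moments of `Fₖ = μ + √μ fₖ`, so their differences are moments of
`√μ (f₁ - f₂)`, bounded by `‖f₁ - f₂‖_∞` times the Gaussian moments `∫ √μ` and `∫ |v| √μ`. With
`ρₖ ≥ 1/2`, the splitting `U₁ - U₂ = ρ₁⁻¹ (A₁ - A₂) + (ρ₁⁻¹ - ρ₂⁻¹) A₂` gives the estimate, `A₂`
being bounded because `μ ≤ √μ` and `|f₂| ≤ 1/2`.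
-/

open MeasureTheory Real

/-- The velocity weight `w(v) = (1+|v|)^β e^{θ|v|²}`. -/
noncomputable def wgt (β θ : ℝ) (v : EuclideanSpace ℝ (Fin 3)) : ℝ :=
  (1 + ‖v‖) ^ β * Real.exp (θ * ‖v‖^2)

section Gaussian

variable {V : Type*} [NormedAddCommGroup V] [InnerProductSpace ℝ V] [FiniteDimensional ℝ V]
  [MeasurableSpace V] [BorelSpace V]

theorem integrable_exp_neg_mul_norm_sq {b : ℝ} (hb : 0 < b) :
    Integrable (fun v : V => exp (-b * ‖v‖ ^ 2)) := by
  have h := (GaussianFourier.integrable_cexp_neg_mul_sq_norm_add (V := V)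
    (b := (b : ℂ)) (by simpa using hb) 0 0).norm
  refine h.congr (Filter.Eventually.of_forall fun v => ?_)
  simp [Complex.norm_exp, ← Complex.ofReal_pow]

theorem integrable_norm_mul_exp_neg_mul_norm_sq {b : ℝ} (hb : 0 < b) :
    Integrable (fun v : V => ‖v‖ * exp (-b * ‖v‖ ^ 2)) := by
  refine ((integrable_exp_neg_mul_norm_sq (half_pos hb)).const_mul (1 + 2 / b)).mono'
    (by fun_prop) (Filter.Eventually.of_forall fun v => ?_)
  have hlin : ‖v‖ ≤ (1 + 2 / b) * exp (b / 2 * ‖v‖ ^ 2) :=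
    calc ‖v‖ ≤ 1 + ‖v‖ ^ 2 := by nlinarith [sq_nonneg (‖v‖ - 1)]
      _ ≤ 1 + ‖v‖ ^ 2 + (b / 2 * ‖v‖ ^ 2 + 2 / b) := le_add_of_nonneg_right (by positivity)
      _ = (1 + 2 / b) * (1 + b / 2 * ‖v‖ ^ 2) := by field_simp; ring
      _ ≤ (1 + 2 / b) * exp (b / 2 * ‖v‖ ^ 2) := by
          gcongr; linarith [add_one_le_exp (b / 2 * ‖v‖ ^ 2)]
  rw [norm_of_nonneg (by positivity)]
  calc ‖v‖ * exp (-b * ‖v‖ ^ 2)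
      ≤ (1 + 2 / b) * exp (b / 2 * ‖v‖ ^ 2) * exp (-b * ‖v‖ ^ 2) := by gcongr
    _ = (1 + 2 / b) * exp (-(b / 2) * ‖v‖ ^ 2) := by
        rw [mul_assoc, ← exp_add]; ring_nf

end Gaussian

section WeightedIntegral

variable {V E : Type*} [MeasurableSpace V] {ν : Measure V} [NormedAddCommGroup E]
  [NormedSpace ℝ E] {φ g : V → ℝ} {h : V → E}

theorem integrable_smul_of_abs_le (hint : Integrable (fun v => φ v * ‖h v‖) ν)
    (hgm : AEStronglyMeasurable g ν) (hhm : AEStronglyMeasurable h ν) (hg : ∀ v, |g v| ≤ φ v) :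
    Integrable (fun v => g v • h v) ν :=
  hint.mono' (hgm.smul hhm) (Filter.Eventually.of_forall fun v => by
    rw [norm_smul, norm_eq_abs]; gcongr; exact hg v)

theorem norm_integral_smul_le_of_abs_le (hint : Integrable (fun v => φ v * ‖h v‖) ν)
    (hg : ∀ v, |g v| ≤ φ v) : ‖∫ v, g v • h v ∂ν‖ ≤ ∫ v, φ v * ‖h v‖ ∂ν :=
  norm_integral_le_of_norm_le hint (Filter.Eventually.of_forall fun v => by
    rw [norm_smul, norm_eq_abs]; gcongr; exact hg v)

end WeightedIntegral

theorem norm_inv_smul_sub_inv_smul_le {E : Type*} [NormedAddCommGroup E] [NormedSpace ℝ E]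
    {r ρ₁ ρ₂ : ℝ} (hr : 0 < r) (h₁ : r ≤ ρ₁) (h₂ : r ≤ ρ₂) (A₁ A₂ : E) :
    ‖ρ₁⁻¹ • A₁ - ρ₂⁻¹ • A₂‖ ≤ r⁻¹ * ‖A₁ - A₂‖ + r⁻¹ ^ 2 * |ρ₁ - ρ₂| * ‖A₂‖ := by
  have hρ₁ : 0 < ρ₁ := hr.trans_le h₁
  have hρ₂ : 0 < ρ₂ := hr.trans_le h₂
  have hinv : |ρ₁⁻¹| ≤ r⁻¹ := by
    rw [abs_of_pos (inv_pos.2 hρ₁)]; exact inv_anti₀ hr h₁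
  have hinv_sub : |ρ₁⁻¹ - ρ₂⁻¹| ≤ r⁻¹ ^ 2 * |ρ₁ - ρ₂| := by
    rw [inv_sub_inv hρ₁.ne' hρ₂.ne', abs_div, abs_sub_comm, abs_of_pos (mul_pos hρ₁ hρ₂),
      div_eq_inv_mul, mul_inv, sq]
    gcongr
  calc ‖ρ₁⁻¹ • A₁ - ρ₂⁻¹ • A₂‖ = ‖ρ₁⁻¹ • (A₁ - A₂) + (ρ₁⁻¹ - ρ₂⁻¹) • A₂‖ := by
        congr 1; module
    _ ≤ |ρ₁⁻¹| * ‖A₁ - A₂‖ + |ρ₁⁻¹ - ρ₂⁻¹| * ‖A₂‖ := by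
        rw [← norm_eq_abs, ← norm_eq_abs, ← norm_smul, ← norm_smul]; exact norm_add_le _ _
    _ ≤ r⁻¹ * ‖A₁ - A₂‖ + r⁻¹ ^ 2 * |ρ₁ - ρ₂| * ‖A₂‖ := by gcongr

local notation "ℝ³" => EuclideanSpace ℝ (Fin 3)

theorem abs_le_of_abs_wgt_mul_le {β θ d : ℝ} (hβ : 0 ≤ β) (hθ : 0 ≤ θ) {f : ℝ³ → ℝ}
    (hf : ∀ v, |wgt β θ v * f v| ≤ d) (v : ℝ³) : |f v| ≤ d := by
  have hw : 1 ≤ wgt β θ v :=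
    one_le_mul_of_one_le_of_one_le (one_le_rpow (by linarith [norm_nonneg v]) hβ)
      (one_le_exp (by positivity))
  calc |f v| ≤ wgt β θ v * |f v| := le_mul_of_one_le_left (abs_nonneg _) hw
    _ = |wgt β θ v * f v| := by rw [abs_mul, abs_of_pos (zero_lt_one.trans_le hw)]
    _ ≤ d := hf v

theorem gaussMu_nonneg (v : ℝ³) : 0 ≤ gaussMu v := by
  unfold gaussMu; positivity

theorem continuous_gaussMu : Continuous gaussMu := by
  unfold gaussMu; fun_prop

theorem sqrt_gaussMu (v : ℝ³) :
    √(gaussMu v) = (2 * π) ^ (-(3 : ℝ) / 4) * exp (-(1 / 4) * ‖v‖ ^ 2) := by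
  rw [sqrt_eq_iff_mul_self_eq (gaussMu_nonneg v) (by positivity), gaussMu,
    mul_mul_mul_comm, ← rpow_add (by positivity), ← exp_add]
  ring_nf

theorem gaussMu_le_sqrt_gaussMu (v : ℝ³) : gaussMu v ≤ √(gaussMu v) := by
  have hμ_le_one : gaussMu v ≤ 1 :=
    mul_le_one₀ (rpow_le_one_of_one_le_of_nonpos (by linarith [two_le_pi]) (by norm_num))
      (exp_nonneg _) (exp_le_one_iff.2 (by nlinarith [sq_nonneg ‖v‖]))
  calc gaussMu v = √(gaussMu v) * √(gaussMu v) := (mul_self_sqrt (gaussMu_nonneg v)).symm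
    _ ≤ √(gaussMu v) * 1 := by gcongr; exact sqrt_le_one.2 hμ_le_one
    _ = √(gaussMu v) := mul_one _

theorem integrable_sqrt_gaussMu : Integrable (fun v : ℝ³ => √(gaussMu v)) := by
  simp_rw [sqrt_gaussMu]
  exact (integrable_exp_neg_mul_norm_sq (by norm_num)).const_mul _

theorem integrable_sqrt_gaussMu_mul_norm : Integrable (fun v : ℝ³ => √(gaussMu v) * ‖v‖) := by
  simp_rw [sqrt_gaussMu]
  refine ((integrable_norm_mul_exp_neg_mul_norm_sq (b := 1 / 4) (by norm_num)).const_mul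
    ((2 * π) ^ (-(3 : ℝ) / 4))).congr (Filter.Eventually.of_forall fun v => ?_)
  ring

noncomputable def perturbedMaxwellian (f : ℝ³ → ℝ) (v : ℝ³) : ℝ :=
  gaussMu v + √(gaussMu v) * f v

section PerturbedMaxwellian

variable {E : Type*} [NormedAddCommGroup E] [NormedSpace ℝ E] {h : ℝ³ → E}
  {f f₁ f₂ : ℝ³ → ℝ} {B M : ℝ}

theorem abs_perturbedMaxwellian_le (hf : ∀ v, |f v| ≤ B) (v : ℝ³) :
    |perturbedMaxwellian f v| ≤ (1 + B) * √(gaussMu v) := by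
  calc |perturbedMaxwellian f v| ≤ |gaussMu v| + |√(gaussMu v) * f v| := abs_add_le _ _
    _ = gaussMu v + √(gaussMu v) * |f v| := by
        rw [abs_mul, abs_of_nonneg (gaussMu_nonneg v), abs_of_nonneg (sqrt_nonneg _)]
    _ ≤ √(gaussMu v) + √(gaussMu v) * B := by
        gcongr; exacts [gaussMu_le_sqrt_gaussMu v, hf v]
    _ = (1 + B) * √(gaussMu v) := by ring

theorem integrable_perturbedMaxwellian_smul (hfm : Measurable f) (hf : ∀ v, |f v| ≤ B)
    (hhm : AEStronglyMeasurable h) (hint : Integrable (fun v => √(gaussMu v) * ‖h v‖)) :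
    Integrable (fun v => perturbedMaxwellian f v • h v) :=
  integrable_smul_of_abs_le (by simpa only [mul_assoc] using hint.const_mul (1 + B))
    (continuous_gaussMu.measurable.add
      (continuous_gaussMu.sqrt.measurable.mul hfm)).aestronglyMeasurable hhm (abs_perturbedMaxwellian_le hf)

theorem norm_integral_perturbedMaxwellian_smul_le (hf : ∀ v, |f v| ≤ B)
    (hint : Integrable (fun v => √(gaussMu v) * ‖h v‖)) :
    ‖∫ v, perturbedMaxwellian f v • h v‖ ≤ (1 + B) * ∫ v, √(gaussMu v) * ‖h v‖ := by
  rw [← integral_const_mul]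
  simp_rw [← mul_assoc]
  exact norm_integral_smul_le_of_abs_le (by simpa only [mul_assoc] using hint.const_mul (1 + B))
    (abs_perturbedMaxwellian_le hf)

theorem norm_integral_perturbedMaxwellian_smul_sub_le (hf₁m : Measurable f₁)
    (hf₂m : Measurable f₂) (hf₁ : ∀ v, |f₁ v| ≤ B) (hf₂ : ∀ v, |f₂ v| ≤ B)
    (hM : ∀ v, |f₁ v - f₂ v| ≤ M) (hhm : AEStronglyMeasurable h)
    (hint : Integrable (fun v => √(gaussMu v) * ‖h v‖)) :
    ‖(∫ v, perturbedMaxwellian f₁ v • h v) - ∫ v, perturbedMaxwellian f₂ v • h v‖ ≤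
      M * ∫ v, √(gaussMu v) * ‖h v‖ := by
  rw [← integral_sub (integrable_perturbedMaxwellian_smul hf₁m hf₁ hhm hint)
    (integrable_perturbedMaxwellian_smul hf₂m hf₂ hhm hint), ← integral_const_mul]
  simp_rw [← sub_smul, ← mul_assoc]
  refine norm_integral_smul_le_of_abs_le (by simpa only [mul_assoc] using hint.const_mul M)
    fun v => ?_
  rw [perturbedMaxwellian, perturbedMaxwellian, add_sub_add_left_eq_sub, ← mul_sub, abs_mul,
    abs_of_nonneg (sqrt_nonneg _), mul_comm M]
  gcongr
  exact hM v

theorem abs_integral_perturbedMaxwellian_sub_le (hf₁m : Measurable f₁) (hf₂m : Measurable f₂)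
    (hf₁ : ∀ v, |f₁ v| ≤ B) (hf₂ : ∀ v, |f₂ v| ≤ B) (hM : ∀ v, |f₁ v - f₂ v| ≤ M) :
    |(∫ v, perturbedMaxwellian f₁ v) - ∫ v, perturbedMaxwellian f₂ v| ≤
      M * ∫ v, √(gaussMu v) := by
  simpa using norm_integral_perturbedMaxwellian_smul_sub_le hf₁m hf₂m hf₁ hf₂ hM
    (h := fun _ => (1 : ℝ)) aestronglyMeasurable_const (by simpa using integrable_sqrt_gaussMu)

end PerturbedMaxwellian

theorem stmt18_general (β θ : ℝ) (hθ0 : 0 ≤ θ) (hβ : 0 ≤ β) :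
    ∃ C > 0, ∀ δ : ℝ, 0 ≤ δ → δ ≤ 1/2 →
      ∀ f₁ f₂ : EuclideanSpace ℝ (Fin 3) → ℝ, Measurable f₁ → Measurable f₂ →
      (∀ v, |wgt β θ v * f₁ v| ≤ δ) → (∀ v, |wgt β θ v * f₂ v| ≤ δ) →
      ∀ ρ₁ ρ₂ : ℝ,
        ρ₁ = (∫ v, (gaussMu v + Real.sqrt (gaussMu v) * f₁ v)) →
        ρ₂ = (∫ v, (gaussMu v + Real.sqrt (gaussMu v) * f₂ v)) →
        1/2 ≤ ρ₁ → 1/2 ≤ ρ₂ →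
      ∀ U₁ U₂ : EuclideanSpace ℝ (Fin 3),
        U₁ = ρ₁⁻¹ • (∫ v, (gaussMu v + Real.sqrt (gaussMu v) * f₁ v) • v) →
        U₂ = ρ₂⁻¹ • (∫ v, (gaussMu v + Real.sqrt (gaussMu v) * f₂ v) • v) →
      ∀ M : ℝ, (∀ v, |wgt β θ v * (f₁ v - f₂ v)| ≤ M) →
      ‖U₁ - U₂‖ ≤ C * M := by
  set m₀ := ∫ v : ℝ³, √(gaussMu v)
  set m₁ := ∫ v : ℝ³, √(gaussMu v) * ‖v‖
  have hm₀ : 0 ≤ m₀ := integral_nonneg fun v => sqrt_nonneg _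
  have hm₁ : 0 ≤ m₁ := integral_nonneg fun v => by positivity
  refine ⟨2 * m₁ + 6 * m₀ * m₁ + 1, by positivity, ?_⟩
  rintro δ - hδ f₁ f₂ hf₁m hf₂m hf₁ hf₂ ρ₁ ρ₂
    (hρ₁ : ρ₁ = ∫ v, perturbedMaxwellian f₁ v) (hρ₂ : ρ₂ = ∫ v, perturbedMaxwellian f₂ v)
    hρ₁_ge hρ₂_ge U₁ U₂ (hU₁ : U₁ = ρ₁⁻¹ • ∫ v, perturbedMaxwellian f₁ v • v)
    (hU₂ : U₂ = ρ₂⁻¹ • ∫ v, perturbedMaxwellian f₂ v • v) M hM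
  have hb₁ v : |f₁ v| ≤ 1 / 2 := (abs_le_of_abs_wgt_mul_le hβ hθ0 hf₁ v).trans hδ
  have hb₂ v : |f₂ v| ≤ 1 / 2 := (abs_le_of_abs_wgt_mul_le hβ hθ0 hf₂ v).trans hδ
  have hM' := abs_le_of_abs_wgt_mul_le hβ hθ0 hM
  have hM₀ : 0 ≤ M := (abs_nonneg _).trans (hM' 0)
  have hρ : |ρ₁ - ρ₂| ≤ M * m₀ := by
    rw [hρ₁, hρ₂]; exact abs_integral_perturbedMaxwellian_sub_le hf₁m hf₂m hb₁ hb₂ hM'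
  have hA := norm_integral_perturbedMaxwellian_smul_sub_le hf₁m hf₂m hb₁ hb₂ hM'
    (h := fun v => v) aestronglyMeasurable_id integrable_sqrt_gaussMu_mul_norm
  have hA₂ := norm_integral_perturbedMaxwellian_smul_le hb₂ integrable_sqrt_gaussMu_mul_norm
  rw [hU₁, hU₂]
  calc _ ≤ (1 / 2)⁻¹ * ‖(∫ v, perturbedMaxwellian f₁ v • v) - ∫ v, perturbedMaxwellian f₂ v • v‖
        + (1 / 2)⁻¹ ^ 2 * |ρ₁ - ρ₂| * ‖∫ v, perturbedMaxwellian f₂ v • v‖ :=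
        norm_inv_smul_sub_inv_smul_le one_half_pos hρ₁_ge hρ₂_ge _ _
    _ ≤ (1 / 2)⁻¹ * (M * m₁) + (1 / 2)⁻¹ ^ 2 * (M * m₀) * ((1 + 1 / 2) * m₁) := by gcongr
    _ ≤ (2 * m₁ + 6 * m₀ * m₁ + 1) * M := by nlinarith

/-- Stability of the bulk velocity moment: `|U₁ − U₂| ≤ C ‖w(f₁ − f₂)‖_∞`,
assuming both densities are at least 1/2. -/
theorem stmt18 (β θ : ℝ) (hθ0 : 0 ≤ θ) (hθ : θ < 1/4) (hβ : 0 ≤ β) :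
    ∃ C > 0, ∀ δ : ℝ, 0 ≤ δ → δ ≤ 1/2 →
      ∀ f₁ f₂ : EuclideanSpace ℝ (Fin 3) → ℝ, Measurable f₁ → Measurable f₂ →
      (∀ v, |wgt β θ v * f₁ v| ≤ δ) → (∀ v, |wgt β θ v * f₂ v| ≤ δ) →
      ∀ ρ₁ ρ₂ : ℝ,
        ρ₁ = (∫ v, (gaussMu v + Real.sqrt (gaussMu v) * f₁ v)) →
        ρ₂ = (∫ v, (gaussMu v + Real.sqrt (gaussMu v) * f₂ v)) →
        1/2 ≤ ρ₁ → 1/2 ≤ ρ₂ →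
      ∀ U₁ U₂ : EuclideanSpace ℝ (Fin 3),
        U₁ = ρ₁⁻¹ • (∫ v, (gaussMu v + Real.sqrt (gaussMu v) * f₁ v) • v) →
        U₂ = ρ₂⁻¹ • (∫ v, (gaussMu v + Real.sqrt (gaussMu v) * f₂ v) • v) →
      ∀ M : ℝ, (∀ v, |wgt β θ v * (f₁ v - f₂ v)| ≤ M) →
      ‖U₁ - U₂‖ ≤ C * M :=
  stmt18_general β θ hθ0 hβ
end
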